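/- arXiv:2509.22035 — 5 statements merged into one kernel-verified Lean document; each statement's English description precedes it below -/
import Mathlib

section
/- For every real p with 2 < p < ∞ and every integer d ≥ 1, the Nikolskii constant satisfies 𝒞_{d,p} ≤ d·⌈p/2⌉ + 1; that is, ‖P‖_∞^p ≤ (d⌈p/2⌉+1)‖P‖_p^p for all polynomials P of degree at most d. -/
noncomputable def supNorm (P : Polynomial ℂ) : ℝ :=
  ⨆ θ : ℝ, ‖P.eval (Complex.exp (θ * Complex.I))‖

noncomputable def pNormPow (p : ℝ) (P : Polynomial ℂ) : ℝ :=
  (1 / (2 * Real.pi)) *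
    ∫ θ in (-Real.pi)..Real.pi, (‖P.eval (Complex.exp (θ * Complex.I))‖) ^ p

/-!
Put `n = ⌈p/2⌉`. Since `P ^ n` has degree at most `d n`, Parseval and Cauchy–Schwarz give
`‖P‖_∞ ^ (2n) = ‖P ^ n‖_∞ ^ 2 ≤ (d n + 1) ‖P ^ n‖_2 ^ 2 = (d n + 1) ‖P‖_{2n} ^ (2n)`, and the
pointwise bound `|P| ^ (2n) ≤ |P| ^ p ‖P‖_∞ ^ (2n - p)` turns the right-hand side into
`(d n + 1) ‖P‖_p ^ p ‖P‖_∞ ^ (2n - p)`; dividing by `‖P‖_∞ ^ (2n - p)` gives the bound.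
-/

open Complex Finset intervalIntegral MeasureTheory
open scoped Real ComplexConjugate

noncomputable def normOnCircle (P : Polynomial ℂ) (θ : ℝ) : ℝ :=
  ‖P.eval (exp (θ * I))‖

lemma normOnCircle_nonneg (P : Polynomial ℂ) (θ : ℝ) : 0 ≤ normOnCircle P θ := norm_nonneg _

lemma continuous_normOnCircle (P : Polynomial ℂ) : Continuous (normOnCircle P) := by
  unfold normOnCircle; fun_prop

lemma normOnCircle_le_sum_norm_coeff (P : Polynomial ℂ) {n : ℕ} (hn : P.natDegree < n) (θ : ℝ) :
    normOnCircle P θ ≤ ∑ j ∈ range n, ‖P.coeff j‖ := by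
  rw [normOnCircle, Polynomial.eval_eq_sum_range' hn]
  refine (norm_sum_le _ _).trans_eq (sum_congr rfl fun j _ => ?_)
  rw [norm_mul, norm_pow, norm_exp_ofReal_mul_I, one_pow, mul_one]

lemma bddAbove_range_normOnCircle (P : Polynomial ℂ) : BddAbove (Set.range (normOnCircle P)) :=
  ⟨_, Set.forall_mem_range.2 (normOnCircle_le_sum_norm_coeff P P.natDegree.lt_succ_self)⟩

lemma supNorm_eq_iSup (P : Polynomial ℂ) : supNorm P = ⨆ θ, normOnCircle P θ := rfl

lemma normOnCircle_le_supNorm (P : Polynomial ℂ) (θ : ℝ) : normOnCircle P θ ≤ supNorm P :=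
  le_ciSup (bddAbove_range_normOnCircle P) θ

lemma supNorm_nonneg (P : Polynomial ℂ) : 0 ≤ supNorm P :=
  (normOnCircle_nonneg P 0).trans (normOnCircle_le_supNorm P 0)

lemma normOnCircle_pow (P : Polynomial ℂ) (n : ℕ) (θ : ℝ) :
    normOnCircle (P ^ n) θ = normOnCircle P θ ^ n := by
  rw [normOnCircle, normOnCircle, Polynomial.eval_pow, norm_pow]

lemma supNorm_pow (P : Polynomial ℂ) (n : ℕ) : supNorm (P ^ n) = supNorm P ^ n := by
  have hmono : MonotoneOn (· ^ n) (Set.range (normOnCircle P)) :=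
    (pow_left_monotoneOn (M₀ := ℝ)).mono (Set.range_subset_iff.2 (normOnCircle_nonneg P))
  have := hmono.map_csSup_of_continuousWithinAt (continuous_pow n).continuousWithinAt
    (Set.range_nonempty _) (bddAbove_range_normOnCircle P)
  rw [supNorm_eq_iSup, supNorm_eq_iSup, iSup, iSup, this, ← Set.range_comp]
  simp_rw [Function.comp_def, normOnCircle_pow]

lemma integral_exp_int_mul_I (m : ℤ) :
    ∫ θ in -π..π, exp ((m * θ : ℝ) * I) = if m = 0 then (2 * π : ℂ) else 0 := by
  split_ifs with hm
  · simp [hm, two_mul]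
  · have hm' : (m : ℝ) ≠ 0 := Int.cast_ne_zero.2 hm
    rw [intervalIntegral.integral_comp_mul_left (fun t : ℝ => exp (t * I)) hm', mul_neg,
      integral_exp_mul_I_eq_sin, Real.sin_int_mul_pi, ofReal_zero, mul_zero, smul_zero]

lemma sq_normOnCircle_eq_sum (P : Polynomial ℂ) {n : ℕ} (hn : P.natDegree < n) (θ : ℝ) :
    ((normOnCircle P θ ^ 2 : ℝ) : ℂ) = ∑ j ∈ range n, ∑ k ∈ range n,
      P.coeff j * conj (P.coeff k) * exp ((((j : ℤ) - k : ℤ) * θ : ℝ) * I) := by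
  rw [normOnCircle, ofReal_pow, ← mul_conj', Polynomial.eval_eq_sum_range' hn, map_sum,
    sum_mul_sum]
  refine sum_congr rfl fun j _ => sum_congr rfl fun k _ => ?_
  rw [map_mul, map_pow, ← exp_conj, ← exp_nat_mul, ← exp_nat_mul, mul_mul_mul_comm, ← exp_add]
  congr 2
  simp only [map_mul, conj_ofReal, conj_I]
  push_cast
  ring

lemma integral_sq_normOnCircle (P : Polynomial ℂ) {n : ℕ} (hn : P.natDegree < n) :
    ∫ θ in -π..π, normOnCircle P θ ^ 2 = 2 * π * ∑ j ∈ range n, ‖P.coeff j‖ ^ 2 := by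
  have orth (j k : ℕ) : ∫ θ in -π..π, exp ((((j : ℤ) - k : ℤ) * θ : ℝ) * I)
      = if j = k then (2 * π : ℂ) else 0 := by
    rw [integral_exp_int_mul_I]
    simp only [sub_eq_zero, Nat.cast_inj]
  apply ofReal_injective
  rw [← intervalIntegral.integral_ofReal]
  simp_rw [sq_normOnCircle_eq_sum P hn]
  rw [integral_finsetSum fun j _ => (by fun_prop : Continuous _).intervalIntegrable _ _]
  refine (sum_congr rfl fun j _ =>
    integral_finsetSum fun k _ => (by fun_prop : Continuous _).intervalIntegrable _ _).trans ?_
  simp only [intervalIntegral.integral_const_mul, orth, mul_ite, mul_zero]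
  rw [sum_congr rfl fun j hj => (sum_ite_eq (range n) j _).trans (if_pos hj), ofReal_mul,
    ofReal_sum, mul_sum]
  refine sum_congr rfl fun j _ => ?_
  rw [mul_conj', ofReal_pow]
  push_cast
  ring

lemma pNormPow_eq (p : ℝ) (P : Polynomial ℂ) :
    pNormPow p P = (1 / (2 * π)) * ∫ θ in -π..π, normOnCircle P θ ^ p := rfl

lemma pNormPow_nonneg (p : ℝ) (P : Polynomial ℂ) : 0 ≤ pNormPow p P := by
  rw [pNormPow_eq]
  have : 0 ≤ ∫ θ in -π..π, normOnCircle P θ ^ p := intervalIntegral.integral_nonneg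
    (neg_le_self Real.pi_pos.le) fun θ _ => Real.rpow_nonneg (normOnCircle_nonneg P θ) p
  positivity

lemma pNormPow_two_eq_sum_sq_norm_coeff (P : Polynomial ℂ) {n : ℕ} (hn : P.natDegree < n) :
    pNormPow 2 P = ∑ j ∈ range n, ‖P.coeff j‖ ^ 2 := by
  simp_rw [pNormPow_eq, Real.rpow_two, integral_sq_normOnCircle P hn]
  field_simp

lemma pNormPow_pow (q : ℝ) (P : Polynomial ℂ) (n : ℕ) :
    pNormPow q (P ^ n) = pNormPow (n * q) P := by
  simp_rw [pNormPow_eq, normOnCircle_pow, Real.rpow_mul (normOnCircle_nonneg P _),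
    Real.rpow_natCast]

lemma supNorm_sq_le_mul_pNormPow_two (P : Polynomial ℂ) {n : ℕ} (hn : P.natDegree < n) :
    supNorm P ^ 2 ≤ n * pNormPow 2 P := by
  have hsup : supNorm P ≤ ∑ j ∈ range n, ‖P.coeff j‖ :=
    ciSup_le (normOnCircle_le_sum_norm_coeff P hn)
  calc supNorm P ^ 2 ≤ (∑ j ∈ range n, ‖P.coeff j‖) ^ 2 := by gcongr; exact supNorm_nonneg P
    _ ≤ n * ∑ j ∈ range n, ‖P.coeff j‖ ^ 2 := by
      simpa using sq_sum_le_card_mul_sum_sq (s := range n) (f := fun j => ‖P.coeff j‖)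
    _ = n * pNormPow 2 P := by rw [pNormPow_two_eq_sum_sq_norm_coeff P hn]

lemma pNormPow_le_mul_supNorm_rpow (P : Polynomial ℂ) {p q : ℝ} (hp : 0 < p) (hpq : p ≤ q) :
    pNormPow q P ≤ pNormPow p P * supNorm P ^ (q - p) := by
  have pointwise (θ : ℝ) :
      normOnCircle P θ ^ q ≤ normOnCircle P θ ^ p * supNorm P ^ (q - p) := by
    have h0 := normOnCircle_nonneg P θ
    calc normOnCircle P θ ^ q = normOnCircle P θ ^ p * normOnCircle P θ ^ (q - p) := by
          rw [← Real.rpow_add' h0 (by linarith), add_sub_cancel]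
      _ ≤ _ := by gcongr; exact normOnCircle_le_supNorm P θ
  have hcont (r : ℝ) (hr : 0 ≤ r) : Continuous fun θ => normOnCircle P θ ^ r :=
    (continuous_normOnCircle P).rpow_const fun _ => Or.inr hr
  rw [pNormPow_eq, pNormPow_eq, mul_assoc, ← intervalIntegral.integral_mul_const]
  gcongr
  exact integral_mono_on (neg_le_self Real.pi_pos.le)
    ((hcont q (by linarith)).intervalIntegrable _ _)
    (((hcont p hp.le).mul continuous_const).intervalIntegrable _ _) fun θ _ => pointwise θ

theorem supNorm_rpow_le_mul_pNormPow (P : Polynomial ℂ) {d n : ℕ} (hP : P.natDegree ≤ d)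
    {p : ℝ} (hp : 0 < p) (hpn : p ≤ 2 * n) :
    supNorm P ^ p ≤ (d * n + 1) * pNormPow p P := by
  set M := supNorm P
  have hdeg : (P ^ n).natDegree < d * n + 1 := by
    rw [Polynomial.natDegree_pow, mul_comm]
    exact Nat.lt_succ_of_le (Nat.mul_le_mul_right n hP)
  have key : M ^ p * M ^ (2 * n - p) ≤ ((d * n + 1) * pNormPow p P) * M ^ (2 * n - p) :=
    calc M ^ p * M ^ (2 * n - p) = supNorm (P ^ n) ^ 2 := by
          rw [← Real.rpow_add' (supNorm_nonneg P) (by linarith), add_sub_cancel, supNorm_pow,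
            ← pow_mul, ← Real.rpow_natCast]
          push_cast
          ring_nf
      _ ≤ (d * n + 1 : ℕ) * pNormPow 2 (P ^ n) := supNorm_sq_le_mul_pNormPow_two _ hdeg
      _ = (d * n + 1) * pNormPow (2 * n) P := by
          rw [pNormPow_pow, mul_comm (n : ℝ)]
          push_cast
          rfl
      _ ≤ (d * n + 1) * (pNormPow p P * M ^ (2 * n - p)) := by
          gcongr
          exact pNormPow_le_mul_supNorm_rpow P hp hpn
      _ = ((d * n + 1) * pNormPow p P) * M ^ (2 * n - p) := by ring
  obtain h0 | h0 : 0 = M ∨ 0 < M := (supNorm_nonneg P).eq_or_lt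
  · rw [← h0, Real.zero_rpow hp.ne']
    have := pNormPow_nonneg p P
    positivity
  · exact le_of_mul_le_mul_right key (Real.rpow_pos_of_pos h0 _)

theorem stmt2_general (p : ℝ) (hp : 2 < p) (d : ℕ) :
    ∀ P : Polynomial ℂ, P.natDegree ≤ d →
      (supNorm P) ^ p ≤ ((d : ℝ) * (⌈p / 2⌉ : ℤ) + 1) * pNormPow p P := by
  intro P hP
  obtain ⟨n, hn⟩ := Int.eq_ofNat_of_zero_le (Int.ceil_nonneg (by positivity) : 0 ≤ ⌈p / 2⌉)
  have hpn : p ≤ 2 * n := by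
    have := Int.le_ceil (p / 2)
    rw [hn, Int.cast_natCast] at this
    linarith
  rw [hn, Int.cast_natCast]
  exact supNorm_rpow_le_mul_pNormPow P hP (by linarith) hpn

theorem stmt2 (p : ℝ) (hp : 2 < p) (d : ℕ) (hd : 1 ≤ d) :
    ∀ P : Polynomial ℂ, P.natDegree ≤ d →
      (supNorm P) ^ p ≤ ((d : ℝ) * (⌈p / 2⌉ : ℤ) + 1) * pNormPow p P :=
  stmt2_general p hp d
end

section
/- For real x ≥ 1/2, the beta function satisfies B(x, 1/2) ≥ √(π(4x+1))/(2x). -/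
open Real

-- midpoint log-convexity: Γ(x+1/2)^2 ≤ Γ(x) * Γ(x+1) for x > 0
lemma gamma_sq_le (x : ℝ) (hx : 0 < x) :
    Gamma (x + 1/2) ^ 2 ≤ Gamma x * Gamma (x + 1) := by
  have hc := Real.convexOn_log_Gamma.2 (Set.mem_Ioi.2 hx)
    (Set.mem_Ioi.2 (by linarith : (0:ℝ) < x + 1))
    (by norm_num : (0:ℝ) ≤ (1/2:ℝ)) (by norm_num : (0:ℝ) ≤ (1/2:ℝ)) (by norm_num)
  have hmid : (1/2 : ℝ) • x + (1/2 : ℝ) • (x + 1) = x + 1/2 := by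
    simp only [smul_eq_mul]; ring
  rw [hmid] at hc
  simp only [Function.comp_apply, smul_eq_mul] at hc
  have h1 : 0 < Gamma x := Gamma_pos_of_pos hx
  have h2 : 0 < Gamma (x + 1) := Gamma_pos_of_pos (by linarith)
  have h3 : 0 < Gamma (x + 1/2) := Gamma_pos_of_pos (by linarith)
  have := mul_le_mul_of_nonneg_left hc (by norm_num : (0:ℝ) ≤ 2)
  have key : log (Gamma (x + 1/2) ^ 2) ≤ log (Gamma x * Gamma (x + 1)) := by
    rw [log_pow, log_mul h1.ne' h2.ne']
    push_cast
    linarith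
  exact (log_le_log_iff (pow_pos h3 2) (mul_pos h1 h2)).mp key

noncomputable def hfun (x : ℝ) : ℝ := Gamma (x + 1/2) ^ 2 * (x + 1/4) / Gamma (x + 1) ^ 2

lemma hfun_step (x : ℝ) (hx : 0 < x) : hfun x ≤ hfun (x + 1) := by
  have h1 : 0 < Gamma (x + 1) := Gamma_pos_of_pos (by linarith)
  have h3 : 0 < Gamma (x + 1/2) := Gamma_pos_of_pos (by linarith)
  have e1 : Gamma (x + 1 + 1/2) = (x + 1/2) * Gamma (x + 1/2) := by
    rw [show x + 1 + 1/2 = (x + 1/2) + 1 by ring, Gamma_add_one (by positivity)]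
  have e2 : Gamma (x + 1 + 1) = (x + 1) * Gamma (x + 1) := by
    rw [Gamma_add_one (by positivity)]
  rw [hfun, hfun, e1, e2, div_le_div_iff₀ (by positivity) (by positivity)]
  nlinarith [sq_nonneg (Gamma (x+1/2) * Gamma (x+1)), mul_pos h3 h1,
    mul_pos (mul_pos h3 h1) (mul_pos h3 h1)]

lemma hfun_le (x : ℝ) (hx : 0 < x) : hfun x ≤ (x + 1/4) / x := by
  have h1 : 0 < Gamma (x + 1) := Gamma_pos_of_pos (by linarith)
  have hg := gamma_sq_le x hx
  have e : Gamma (x + 1) = x * Gamma x := Gamma_add_one hx.ne'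
  rw [hfun, div_le_div_iff₀ (by positivity) hx]
  calc Gamma (x + 1/2) ^ 2 * (x + 1/4) * x
      ≤ Gamma x * Gamma (x + 1) * (x + 1/4) * x := by
        have : (0:ℝ) ≤ (x + 1/4) * x := by positivity
        nlinarith
    _ = (x + 1/4) * Gamma (x + 1) ^ 2 := by rw [e]; ring

lemma hfun_iter (x : ℝ) (hx : 0 < x) (n : ℕ) : hfun x ≤ hfun (x + n) := by
  induction n with
  | zero => simp
  | succ k ih =>
    have : hfun (x + k) ≤ hfun (x + k + 1) := hfun_step _ (by positivity)
    push_cast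
    calc hfun x ≤ hfun (x + k) := ih
      _ ≤ hfun (x + k + 1) := this
      _ = hfun (x + (k + 1)) := by ring_nf

lemma hfun_le_one (x : ℝ) (hx : 0 < x) : hfun x ≤ 1 := by
  have key : ∀ n : ℕ, hfun x ≤ 1 + (1/4) / (x + n) := by
    intro n
    have hxn : (0:ℝ) < x + n := by positivity
    calc hfun x ≤ hfun (x + n) := hfun_iter x hx n
      _ ≤ (x + n + 1/4) / (x + n) := hfun_le _ hxn
      _ = 1 + (1/4) / (x + n) := by field_simp
  have htend : Filter.Tendsto (fun n : ℕ => 1 + (1/4 : ℝ) / (x + n)) Filter.atTop (nhds 1) := by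
    have h0 : Filter.Tendsto (fun n : ℕ => (1/4 : ℝ) / (x + n)) Filter.atTop (nhds 0) := by
      apply Filter.Tendsto.div_atTop tendsto_const_nhds
      exact Filter.tendsto_atTop_add_const_left _ _ tendsto_natCast_atTop_atTop
    simpa using (tendsto_const_nhds.add h0)
  exact ge_of_tendsto' htend key

noncomputable def betaR (x y : ℝ) : ℝ := Real.Gamma x * Real.Gamma y / Real.Gamma (x + y)

theorem stmt12 (x : ℝ) (hx : 1 / 2 ≤ x) :
    Real.sqrt (Real.pi * (4 * x + 1)) / (2 * x) ≤ betaR x (1 / 2) := by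
  have hx0 : 0 < x := by linarith
  have h1 : 0 < Gamma x := Gamma_pos_of_pos hx0
  have h3 : 0 < Gamma (x + 1/2) := Gamma_pos_of_pos (by linarith)
  have h2 : 0 < Gamma (x + 1) := Gamma_pos_of_pos (by linarith)
  have hh := hfun_le_one x hx0
  rw [hfun, div_le_one (by positivity)] at hh
  have e : Gamma (x + 1) = x * Gamma x := Gamma_add_one hx0.ne'
  -- hh : Γ(x+1/2)^2 * (x+1/4) ≤ (x Γx)^2
  rw [e] at hh
  have hB : betaR x (1/2) = Real.sqrt π * Gamma x / Gamma (x + 1/2) := by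
    rw [betaR, Gamma_one_half_eq]; ring
  rw [hB]
  rw [div_le_div_iff₀ (by positivity) (by positivity)]
  -- √(π(4x+1)) * Γ(x+1/2) ≤ √π * Γ x * (2x)
  have hsq : Real.sqrt (π * (4*x+1)) = Real.sqrt π * Real.sqrt (4*x+1) := by
    rw [← Real.sqrt_mul pi_pos.le]
  rw [hsq]
  have hs4 : Real.sqrt (4*x+1) * Gamma (x + 1/2) ≤ Gamma x * (2*x) := by
    have hnn2 : 0 ≤ Gamma x * (2*x) := by positivity
    have hkey : Real.sqrt ((4*x+1) * Gamma (x + 1/2)^2) ≤ Real.sqrt ((Gamma x * (2*x))^2) :=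
      Real.sqrt_le_sqrt (by nlinarith)
    rwa [Real.sqrt_mul (by linarith) _, Real.sqrt_sq h3.le, Real.sqrt_sq hnn2] at hkey
  calc Real.sqrt π * Real.sqrt (4*x+1) * Gamma (x + 1/2)
      = Real.sqrt π * (Real.sqrt (4*x+1) * Gamma (x + 1/2)) := by ring
    _ ≤ Real.sqrt π * (Gamma x * (2*x)) := by
        exact mul_le_mul_of_nonneg_left hs4 (Real.sqrt_nonneg _)
    _ = Real.sqrt π * Gamma x * (2*x) := by ring
end

section
/- The Nikolskii constant for degree 1 equals 𝒞_{1,p} = π/B((p+1)/2, 1/2) for every 1 < p < ∞; equivalently, the minimum of (1/2π)∫_{-π}^{π}|(1+e^{iθ})/2|^p dθ over degree-1 polynomials P with P(1)=1 is B((p+1)/2,1/2)/π, attained by P(z) = (1+z)/2. -/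
/-!
For `P z = a + b z` one has `sup_θ |P(e^{iθ})| = |a| + |b|`, and after rotating `a` and `b` to
`r = |a|`, `s = |b|` (a shift in `θ`, absorbed by periodicity)
`|r + s e^{iθ}|² = (r + s)² cos²(θ/2) + (r - s)² sin²(θ/2) ≥ (r + s)² cos²(θ/2)`,
with equality for `r = s`, i.e. for `(1 + z)/2`. Hence `‖P‖_p^p ≥ ‖P‖_∞^p · (1/2π) ∫ |cos(θ/2)|^p`,
and the substitution `t = sin² x` identifies this integral with `B((p+1)/2, 1/2)/π`.
-/

open Complex Set MeasureTheory intervalIntegral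
open scoped Polynomial Real

lemma betaR_comm (a b : ℝ) : betaR a b = betaR b a := by
  rw [betaR, betaR, mul_comm, add_comm]

lemma betaR_pos {a b : ℝ} (ha : 0 < a) (hb : 0 < b) : 0 < betaR a b :=
  ProbabilityTheory.beta_pos ha hb

lemma betaR_eq_integral {a b : ℝ} (ha : 0 < a) (hb : 0 < b) :
    betaR a b = ∫ t in (0:ℝ)..1, t ^ (a - 1) * (1 - t) ^ (b - 1) := by
  apply Complex.ofReal_injective
  rw [← intervalIntegral.integral_ofReal, betaR]
  push_cast
  rw [← Complex.Gamma_ofReal, ← Complex.Gamma_ofReal, ← Complex.Gamma_ofReal,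
    Complex.ofReal_add, ← Complex.betaIntegral_eq_Gamma_mul_div _ _ (by simpa) (by simpa)]
  refine intervalIntegral.integral_congr fun t ht => ?_
  rw [uIcc_of_le zero_le_one] at ht
  rw [Complex.ofReal_cpow ht.1, Complex.ofReal_cpow (sub_nonneg.2 ht.2)]
  push_cast
  rfl

lemma sin_sq_rpow_mul_one_sub_sin_sq_rpow_mul {x : ℝ} (p : ℝ) (hsin : 0 < Real.sin x)
    (hcos : 0 < Real.cos x) :
    (Real.sin x ^ 2) ^ ((1:ℝ) / 2 - 1) * (1 - Real.sin x ^ 2) ^ ((p + 1) / 2 - 1) *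
      (2 * Real.sin x * Real.cos x) = 2 * Real.cos x ^ p := by
  have hsin_rpow : (Real.sin x ^ 2) ^ ((1:ℝ) / 2 - 1) = (Real.sin x)⁻¹ := by
    rw [← Real.rpow_natCast, ← Real.rpow_mul hsin.le]
    norm_num [Real.rpow_neg_one]
  have hcos_rpow : (1 - Real.sin x ^ 2) ^ ((p + 1) / 2 - 1) = Real.cos x ^ (p - 1) := by
    rw [← Real.cos_sq', ← Real.rpow_natCast, ← Real.rpow_mul hcos.le]
    ring_nf
  rw [hsin_rpow, hcos_rpow, Real.rpow_sub_one hcos.ne']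
  field_simp

lemma integral_cos_rpow_eq_betaR {p : ℝ} (hp : -1 < p) :
    ∫ x in (0:ℝ)..π / 2, Real.cos x ^ p = betaR ((p + 1) / 2) (1 / 2) / 2 := by
  -- `t = sin² x` is monotone on `[0, π/2]`, so the substitution needs no integrability.
  have hsubst := integral_comp_mul_deriv_of_deriv_nonneg (a := 0) (b := π / 2)
    (f := fun x => Real.sin x ^ 2) (f' := fun x => 2 * Real.sin x * Real.cos x)
    (g := fun t => t ^ ((1:ℝ) / 2 - 1) * (1 - t) ^ ((p + 1) / 2 - 1))
    (by fun_prop)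
    (fun x _ => by simpa [mul_comm, mul_assoc] using (Real.hasDerivAt_sin x).fun_pow 2)
    (fun x hx => by
      rw [min_eq_left (by positivity), max_eq_right (by positivity)] at hx
      have := Real.sin_nonneg_of_nonneg_of_le_pi hx.1.le (by linarith [hx.2, Real.pi_pos])
      have := Real.cos_nonneg_of_mem_Icc ⟨by linarith [hx.1, Real.pi_pos], hx.2.le⟩
      positivity)
  simp only [Real.sin_zero, Real.sin_pi_div_two, Function.comp_apply, zero_pow two_ne_zero,
    one_pow] at hsubst
  rw [← betaR_eq_integral (by norm_num) (by linarith)] at hsubst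
  rw [betaR_comm, ← hsubst, eq_div_iff two_ne_zero, mul_comm, ← intervalIntegral.integral_const_mul,
    integral_of_le (by positivity), integral_of_le (by positivity),
    integral_Ioc_eq_integral_Ioo, integral_Ioc_eq_integral_Ioo]
  refine setIntegral_congr_fun measurableSet_Ioo fun x hx => ?_
  exact (sin_sq_rpow_mul_one_sub_sin_sq_rpow_mul p
    (Real.sin_pos_of_pos_of_lt_pi hx.1 (by linarith [hx.2, Real.pi_pos]))
    (Real.cos_pos_of_mem_Ioo ⟨by linarith [hx.1, Real.pi_pos], hx.2⟩)).symm

lemma integral_abs_cos_half_rpow {p : ℝ} (hp : 0 ≤ p) :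
    ∫ θ in (-π)..π, |Real.cos (θ / 2)| ^ p = 2 * betaR ((p + 1) / 2) (1 / 2) := by
  have hcont : Continuous fun x => |Real.cos x| ^ p :=
    (by fun_prop : Continuous fun x => |Real.cos x|).rpow_const fun _ => Or.inr hp
  have hright : ∫ x in (0:ℝ)..π / 2, |Real.cos x| ^ p = betaR ((p + 1) / 2) (1 / 2) / 2 := by
    rw [← integral_cos_rpow_eq_betaR (by linarith)]
    refine integral_congr fun x hx => ?_
    rw [uIcc_of_le (by positivity)] at hx
    simp only [abs_of_nonneg (Real.cos_nonneg_of_mem_Icc ⟨by linarith [hx.1, Real.pi_pos], hx.2⟩)]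
  have hleft : ∫ x in -(π / 2)..0, |Real.cos x| ^ p = ∫ x in (0:ℝ)..π / 2, |Real.cos x| ^ p := by
    simpa using (integral_comp_neg (a := 0) (b := π / 2) fun x => |Real.cos x| ^ p).symm
  rw [integral_comp_div (fun x => |Real.cos x| ^ p) two_ne_zero, neg_div,
    ← integral_add_adjacent_intervals (b := 0) (hcont.intervalIntegrable _ _)
      (hcont.intervalIntegrable _ _), hleft, hright, smul_eq_mul]
  ring

lemma norm_ofReal_add_mul_exp_sq (r s u : ℝ) :
    ‖(r : ℂ) + s * exp (u * I)‖ ^ 2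
      = (r + s) ^ 2 * Real.cos (u / 2) ^ 2 + (r - s) ^ 2 * Real.sin (u / 2) ^ 2 := by
  rw [Complex.sq_norm, Complex.normSq_apply]
  simp only [add_re, add_im, ofReal_re, ofReal_im, re_ofReal_mul, im_ofReal_mul,
    exp_ofReal_mul_I_re, exp_ofReal_mul_I_im]
  obtain ⟨v, rfl⟩ : ∃ v, u = 2 * v := ⟨u / 2, by ring⟩
  rw [mul_div_cancel_left₀ v two_ne_zero, Real.cos_two_mul, Real.sin_two_mul]
  linear_combination (2 * r * s - r ^ 2 - s ^ 2 + 4 * s ^ 2 * Real.cos v ^ 2) *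
    Real.sin_sq_add_cos_sq v

lemma mul_abs_cos_half_le_norm (r s u : ℝ) :
    (r + s) * |Real.cos (u / 2)| ≤ ‖(r : ℂ) + s * exp (u * I)‖ :=
  le_of_sq_le_sq (by
    rw [norm_ofReal_add_mul_exp_sq, mul_pow, sq_abs]
    nlinarith [sq_nonneg ((r - s) * Real.sin (u / 2))]) (norm_nonneg _)

lemma norm_add_mul_exp_eq (a b : ℂ) (θ : ℝ) :
    ‖a + b * exp (θ * I)‖ = ‖(‖a‖ : ℂ) + ‖b‖ * exp (↑(θ + (b.arg - a.arg)) * I)‖ := by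
  have hrot : a + b * exp (θ * I)
      = exp (a.arg * I) * ((‖a‖ : ℂ) + ‖b‖ * exp (↑(θ + (b.arg - a.arg)) * I)) := by
    conv_lhs => rw [← norm_mul_exp_arg_mul_I a, ← norm_mul_exp_arg_mul_I b]
    rw [mul_add, mul_left_comm, ← Complex.exp_add, mul_assoc, ← Complex.exp_add]
    push_cast
    ring_nf
  rw [hrot, norm_mul, norm_exp_ofReal_mul_I, one_mul]

lemma iSup_norm_add_mul_exp (a b : ℂ) :
    ⨆ θ : ℝ, ‖a + b * exp (θ * I)‖ = ‖a‖ + ‖b‖ := by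
  have hle : ∀ θ : ℝ, ‖a + b * exp (θ * I)‖ ≤ ‖a‖ + ‖b‖ := fun θ =>
    (norm_add_le _ _).trans_eq (by rw [norm_mul, norm_exp_ofReal_mul_I, mul_one])
  have hmax : ‖a + b * exp (↑(a.arg - b.arg) * I)‖ = ‖a‖ + ‖b‖ := by
    rw [norm_add_mul_exp_eq, show a.arg - b.arg + (b.arg - a.arg) = 0 by ring]
    simp only [ofReal_zero, zero_mul, Complex.exp_zero, mul_one]
    exact_mod_cast Real.norm_of_nonneg (by positivity)
  exact le_antisymm (ciSup_le hle) (hmax ▸ le_ciSup ⟨_, forall_mem_range.2 hle⟩ _)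

lemma eval_eq_of_natDegree_le_one {R : Type*} [CommSemiring R] {P : R[X]} (hP : P.natDegree ≤ 1)
    (z : R) : P.eval z = P.coeff 0 + P.coeff 1 * z := by
  conv_lhs => rw [Polynomial.eq_X_add_C_of_natDegree_le_one hP]
  simp only [Polynomial.eval_add, Polynomial.eval_mul, Polynomial.eval_C, Polynomial.eval_X]
  ring

lemma supNorm_of_natDegree_le_one {P : ℂ[X]} (hP : P.natDegree ≤ 1) :
    supNorm P = ‖P.coeff 0‖ + ‖P.coeff 1‖ := by
  simp_rw [supNorm, eval_eq_of_natDegree_le_one hP]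
  exact iSup_norm_add_mul_exp _ _

lemma pNormPow_of_natDegree_le_one (p : ℝ) {P : ℂ[X]} (hP : P.natDegree ≤ 1) :
    pNormPow p P = 1 / (2 * π) *
      ∫ θ in (-π)..π, ‖(‖P.coeff 0‖ : ℂ) + ‖P.coeff 1‖ * exp (θ * I)‖ ^ p := by
  set f : ℝ → ℝ := fun θ => ‖(‖P.coeff 0‖ : ℂ) + ‖P.coeff 1‖ * exp (θ * I)‖ ^ p
  have hper : f.Periodic (2 * π) := fun θ => by
    simp only [f, ofReal_add, ofReal_mul, add_mul, Complex.exp_add, ofReal_ofNat,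
      exp_two_pi_mul_I, mul_one]
  set ψ := (P.coeff 1).arg - (P.coeff 0).arg
  have hshift : ∫ θ in (-π)..π, f (θ + ψ) = ∫ θ in (-π)..π, f θ := by
    rw [integral_comp_add_right f ψ, show π + ψ = -π + ψ + 2 * π by ring,
      hper.intervalIntegral_add_eq _ (-π), show -π + 2 * π = π by ring]
  simp only [pNormPow, eval_eq_of_natDegree_le_one hP, norm_add_mul_exp_eq (P.coeff 0)]
  exact congrArg _ hshift

lemma supNorm_rpow_mul_le_pNormPow {p : ℝ} (hp : 0 ≤ p) {P : ℂ[X]} (hP : P.natDegree ≤ 1) :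
    supNorm P ^ p * (betaR ((p + 1) / 2) (1 / 2) / π) ≤ pNormPow p P := by
  set r := ‖P.coeff 0‖
  set s := ‖P.coeff 1‖
  have hcont : Continuous fun θ : ℝ => ‖(r : ℂ) + s * exp (θ * I)‖ ^ p :=
    (by fun_prop : Continuous fun θ : ℝ => ‖(r : ℂ) + s * exp (θ * I)‖).rpow_const
      fun _ => Or.inr hp
  have hcont_cos : Continuous fun θ : ℝ => ((r + s) * |Real.cos (θ / 2)|) ^ p :=
    (by fun_prop : Continuous fun θ : ℝ => (r + s) * |Real.cos (θ / 2)|).rpow_const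
      fun _ => Or.inr hp
  have hmono : ∫ θ in (-π)..π, ((r + s) * |Real.cos (θ / 2)|) ^ p
      ≤ ∫ θ in (-π)..π, ‖(r : ℂ) + s * exp (θ * I)‖ ^ p :=
    integral_mono_on (by linarith [Real.pi_pos]) (hcont_cos.intervalIntegrable _ _)
      (hcont.intervalIntegrable _ _) fun θ _ =>
        Real.rpow_le_rpow (by positivity) (mul_abs_cos_half_le_norm r s θ) hp
  have hcos : ∫ θ in (-π)..π, ((r + s) * |Real.cos (θ / 2)|) ^ p
      = (r + s) ^ p * (2 * betaR ((p + 1) / 2) (1 / 2)) := by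
    simp_rw [Real.mul_rpow (by positivity : 0 ≤ r + s) (abs_nonneg _)]
    rw [intervalIntegral.integral_const_mul, integral_abs_cos_half_rpow hp]
  rw [supNorm_of_natDegree_le_one hP, pNormPow_of_natDegree_le_one p hP]
  calc (r + s) ^ p * (betaR ((p + 1) / 2) (1 / 2) / π)
      = 1 / (2 * π) * ((r + s) ^ p * (2 * betaR ((p + 1) / 2) (1 / 2))) := by
        field_simp
    _ ≤ _ := by
        rw [← hcos]
        gcongr

lemma norm_half_add_half_mul_exp (u : ℝ) :
    ‖((1 / 2 : ℝ) : ℂ) + ((1 / 2 : ℝ) : ℂ) * exp (u * I)‖ = |Real.cos (u / 2)| :=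
  (sq_eq_sq₀ (norm_nonneg _) (abs_nonneg _)).1 <| by
    rw [norm_ofReal_add_mul_exp_sq, sq_abs]
    ring

noncomputable def halfXAddHalf : ℂ[X] := Polynomial.C (1 / 2) * Polynomial.X + Polynomial.C (1 / 2)

lemma natDegree_halfXAddHalf_le : halfXAddHalf.natDegree ≤ 1 := Polynomial.natDegree_linear_le

lemma norm_coeff_zero_halfXAddHalf : ‖halfXAddHalf.coeff 0‖ = 1 / 2 := by
  norm_num [halfXAddHalf]

lemma norm_coeff_one_halfXAddHalf : ‖halfXAddHalf.coeff 1‖ = 1 / 2 := by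
  norm_num [halfXAddHalf]

lemma supNorm_halfXAddHalf : supNorm halfXAddHalf = 1 := by
  rw [supNorm_of_natDegree_le_one natDegree_halfXAddHalf_le, norm_coeff_zero_halfXAddHalf,
    norm_coeff_one_halfXAddHalf]
  norm_num

lemma pNormPow_halfXAddHalf {p : ℝ} (hp : 0 ≤ p) :
    pNormPow p halfXAddHalf = betaR ((p + 1) / 2) (1 / 2) / π := by
  simp only [pNormPow_of_natDegree_le_one p natDegree_halfXAddHalf_le,
    norm_coeff_zero_halfXAddHalf, norm_coeff_one_halfXAddHalf, norm_half_add_half_mul_exp]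
  rw [integral_abs_cos_half_rpow hp]
  field_simp

theorem stmt14 (p : ℝ) (hp1 : 1 < p) :
    IsLeast {C : ℝ | ∀ P : Polynomial ℂ, P.natDegree ≤ 1 →
      (supNorm P) ^ p ≤ C * pNormPow p P}
      (Real.pi / betaR ((p + 1) / 2) (1 / 2)) := by
  have hp : 0 ≤ p := by linarith
  have hB : 0 < betaR ((p + 1) / 2) (1 / 2) := betaR_pos (by linarith) one_half_pos
  refine ⟨fun P hP => ?_, fun C hC => ?_⟩
  · calc supNorm P ^ p
        = π / betaR ((p + 1) / 2) (1 / 2) *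
            (supNorm P ^ p * (betaR ((p + 1) / 2) (1 / 2) / π)) := by
          field_simp
      _ ≤ π / betaR ((p + 1) / 2) (1 / 2) * pNormPow p P := by
          gcongr
          exact supNorm_rpow_mul_le_pNormPow hp hP
  · have h := hC _ natDegree_halfXAddHalf_le
    rw [supNorm_halfXAddHalf, Real.one_rpow, pNormPow_halfXAddHalf hp, mul_div_assoc',
      one_le_div Real.pi_pos] at h
    rwa [div_le_iff₀ hB]
end

section
/- For every real p with 3 < p ≤ 4: the quantity f(p) = ∫_{π/2}^{(p+2)/2 · 4π/(4p+2)} [ (sin((2p+1)θ/2 − pπ/2)/sin(θ/2))² − (sin((2p+1)θ/2 − pπ)/sin(θ/2))² ] dθ is nonnegative. -/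
/-!
Since `sin² x - sin² y = sin (x + y) sin (x - y)`, the integrand equals
`sin b · cos (φ - b) / sin² (θ / 2)`, where `b = pπ/2` lies in the fourth quadrant and
`φ = q (θ - π/2)`, `q = 2p + 1`, runs over `[0, 3π/2]`. The weight `1 / sin² (θ / 2)` decreases
on `[π/2, π]`, so integrating by parts against a nonnegative primitive of `-cos (φ - b)` bounds
`∫ -cos (φ - b) / sin² (θ / 2)` from below by the boundary terms. The weight is `2` at `π/2` and
at least `1` at the right end, while the primitive grows from `cos b / q` to
`(2 cos b - sin b) / q ≥ 2 cos b / q`.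
-/

open Real Set MeasureTheory intervalIntegral

theorem sin_sq_sub_sin_sq (x y : ℝ) : sin x ^ 2 - sin y ^ 2 = sin (x + y) * sin (x - y) := by
  rw [sin_add, sin_sub]
  linear_combination sin y ^ 2 * sin_sq_add_cos_sq x - sin x ^ 2 * sin_sq_add_cos_sq y

theorem sub_le_integral_mul_deriv_of_deriv_nonpos {w w' F f : ℝ → ℝ} {a b : ℝ}
    (hab : a ≤ b) (hw : ∀ x ∈ Icc a b, HasDerivAt w (w' x) x)
    (hF : ∀ x ∈ Icc a b, HasDerivAt F (f x) x)
    (hw' : IntervalIntegrable w' volume a b) (hf : IntervalIntegrable f volume a b)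
    (hw'_nonpos : ∀ x ∈ Icc a b, w' x ≤ 0) (hF_nonneg : ∀ x ∈ Icc a b, 0 ≤ F x) :
    w b * F b - w a * F a ≤ ∫ x in a..b, w x * f x := by
  rw [← uIcc_of_le hab] at hw hF
  rw [integral_mul_deriv_eq_deriv_mul hw hF hw' hf, le_sub_self_iff, ← neg_nonneg,
    ← intervalIntegral.integral_neg]
  exact integral_nonneg hab fun x hx ↦
    neg_nonneg.mpr (mul_nonpos_of_nonpos_of_nonneg (hw'_nonpos x hx) (hF_nonneg x hx))

theorem hasDerivAt_inv_sin_half_sq {θ : ℝ} (h : sin (θ / 2) ≠ 0) :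
    HasDerivAt (fun θ ↦ (sin (θ / 2) ^ 2)⁻¹) (-cos (θ / 2) / sin (θ / 2) ^ 3) θ := by
  have hsin : HasDerivAt (fun θ ↦ sin (θ / 2)) (cos (θ / 2) * (1 / 2)) θ :=
    ((hasDerivAt_id' θ).div_const 2).sin
  refine ((hsin.fun_pow 2).fun_inv (pow_ne_zero 2 h)).congr_deriv ?_
  field_simp
  ring

/-- The constants make this primitive of `-cos (q * (θ - a) - b)` nonnegative when
`sin b ≤ 0 ≤ cos b`. -/
noncomputable def negCosPrimitive (q a b θ : ℝ) : ℝ :=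
  (cos b * (1 - sin (q * (θ - a))) - sin b * (1 - cos (q * (θ - a)))) / q

theorem hasDerivAt_negCosPrimitive {q : ℝ} (hq : q ≠ 0) (a b θ : ℝ) :
    HasDerivAt (negCosPrimitive q a b) (-cos (q * (θ - a) - b)) θ := by
  have hφ : HasDerivAt (fun θ ↦ q * (θ - a)) q θ := by
    simpa using ((hasDerivAt_id' θ).sub_const a).const_mul q
  refine ((((hφ.sin.const_sub 1).const_mul (cos b)).sub
    ((hφ.cos.const_sub 1).const_mul (sin b))).div_const q).congr_deriv ?_
  rw [cos_sub]
  field_simp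
  ring

theorem negCosPrimitive_nonneg {q b : ℝ} (hq : 0 ≤ q) (hsin : sin b ≤ 0) (hcos : 0 ≤ cos b)
    (a θ : ℝ) : 0 ≤ negCosPrimitive q a b θ := by
  have := sin_le_one (q * (θ - a))
  have := cos_le_one (q * (θ - a))
  exact div_nonneg (by nlinarith) hq

@[simp]
theorem negCosPrimitive_self (q a b : ℝ) : negCosPrimitive q a b a = cos b / q := by
  simp [negCosPrimitive]

theorem negCosPrimitive_add_three_pi_div_two_div {q : ℝ} (hq : q ≠ 0) (a b : ℝ) :
    negCosPrimitive q a b (a + 3 * π / (2 * q)) = (2 * cos b - sin b) / q := by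
  have hφ : q * (a + 3 * π / (2 * q) - a) = π + π / 2 := by field_simp; ring
  simp only [negCosPrimitive, hφ, sin_add, cos_add, sin_pi, cos_pi, sin_pi_div_two,
    cos_pi_div_two]
  ring

theorem integral_neg_cos_div_sin_half_sq_nonneg {q b : ℝ} (hq : 3 ≤ q) (hsin : sin b ≤ 0)
    (hcos : 0 ≤ cos b) :
    0 ≤ ∫ θ in (π / 2)..(π / 2 + 3 * π / (2 * q)),
      -cos (q * (θ - π / 2) - b) / sin (θ / 2) ^ 2 := by
  have hq0 : 0 < q := by linarith
  have hend_le : π / 2 + 3 * π / (2 * q) ≤ π := by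
    have : 3 * π / (2 * q) ≤ π / 2 := by rw [div_le_iff₀ (by positivity)]; nlinarith [pi_pos]
    linarith
  have hle_end : π / 2 ≤ π / 2 + 3 * π / (2 * q) := le_add_of_nonneg_right (by positivity)
  have hF_end := negCosPrimitive_add_three_pi_div_two_div hq0.ne' (π / 2) b
  set c := π / 2 + 3 * π / (2 * q)
  have hsin_pos : ∀ θ ∈ Icc (π / 2) c, 0 < sin (θ / 2) := fun θ hθ ↦
    sin_pos_of_pos_of_lt_pi (by linarith [hθ.1, pi_pos]) (by linarith [hθ.2, pi_pos])
  have hF_nonneg := negCosPrimitive_nonneg hq0.le hsin hcos (π / 2)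
  have hibp := sub_le_integral_mul_deriv_of_deriv_nonpos hle_end
    (fun θ hθ ↦ hasDerivAt_inv_sin_half_sq (hsin_pos θ hθ).ne')
    (fun θ _ ↦ hasDerivAt_negCosPrimitive hq0.ne' _ _ θ)
    (ContinuousOn.intervalIntegrable (by
      rw [uIcc_of_le hle_end]
      exact ContinuousOn.div (by fun_prop) (by fun_prop)
        fun θ hθ ↦ pow_ne_zero 3 (hsin_pos θ hθ).ne'))
    ((by fun_prop : Continuous fun θ ↦ -cos (q * (θ - π / 2) - b)).intervalIntegrable _ _)
    (fun θ hθ ↦ div_nonpos_of_nonpos_of_nonneg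
      (neg_nonpos.mpr <|
        cos_nonneg_of_mem_Icc ⟨by linarith [hθ.1, pi_pos], by linarith [hθ.2]⟩)
      (pow_nonneg (hsin_pos θ hθ).le 3))
    (fun θ _ ↦ hF_nonneg θ)
  have hw_start : (sin (π / 2 / 2) ^ 2)⁻¹ = 2 := by
    rw [show π / 2 / 2 = π / 4 by ring, sin_pi_div_four, div_pow, sq_sqrt zero_le_two]; norm_num
  have hw_end : 1 ≤ (sin (c / 2) ^ 2)⁻¹ := by
    have hs := hsin_pos c ⟨hle_end, le_rfl⟩
    exact one_le_inv_iff₀.mpr ⟨by positivity, by nlinarith [sin_le_one (c / 2)]⟩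
  have hboundary : 2 * (cos b / q) ≤ (sin (c / 2) ^ 2)⁻¹ * negCosPrimitive q (π / 2) b c :=
    calc 2 * (cos b / q) ≤ negCosPrimitive q (π / 2) b c := by
          rw [hF_end, mul_div_assoc']
          gcongr
          linarith
      _ ≤ _ := le_mul_of_one_le_left (hF_nonneg c) hw_end
  rw [hw_start, negCosPrimitive_self] at hibp
  rw [integral_congr fun θ _ ↦ div_eq_inv_mul _ _]
  linarith

theorem sin_nonpos_and_cos_nonneg_of_mem_Icc {x : ℝ} (hx : x ∈ Icc (3 * π / 2) (2 * π)) :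
    sin x ≤ 0 ∧ 0 ≤ cos x := by
  rw [← sin_sub_two_pi, ← cos_sub_two_pi]
  exact ⟨sin_nonpos_of_nonpos_of_neg_pi_le (by linarith [hx.2]) (by linarith [hx.1, pi_pos]),
    cos_nonneg_of_mem_Icc ⟨by linarith [hx.1], by linarith [hx.2, pi_pos]⟩⟩

theorem stmt17 (p : ℝ) (hp3 : 3 < p) (hp4 : p ≤ 4) :
    0 ≤ ∫ θ in (Real.pi / 2)..((p + 2) / 2 * (4 * Real.pi / (4 * p + 2))),
        ((Real.sin ((2 * p + 1) * θ / 2 - p * Real.pi / 2) / Real.sin (θ / 2)) ^ 2 -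
         (Real.sin ((2 * p + 1) * θ / 2 - p * Real.pi) / Real.sin (θ / 2)) ^ 2) := by
  have hend : (p + 2) / 2 * (4 * π / (4 * p + 2)) = π / 2 + 3 * π / (2 * (2 * p + 1)) := by
    field_simp
    ring
  have hintegrand : ∀ θ,
      (sin ((2 * p + 1) * θ / 2 - p * π / 2) / sin (θ / 2)) ^ 2 -
        (sin ((2 * p + 1) * θ / 2 - p * π) / sin (θ / 2)) ^ 2 =
      -sin (p * π / 2) * (-cos ((2 * p + 1) * (θ - π / 2) - p * π / 2) / sin (θ / 2) ^ 2) := by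
    intro θ
    rw [div_pow, div_pow, div_sub_div_same, sin_sq_sub_sin_sq,
      show (2 * p + 1) * θ / 2 - p * π / 2 + ((2 * p + 1) * θ / 2 - p * π) =
        (2 * p + 1) * (θ - π / 2) - p * π / 2 + π / 2 by ring,
      show (2 * p + 1) * θ / 2 - p * π / 2 - ((2 * p + 1) * θ / 2 - p * π) = p * π / 2 by ring,
      sin_add_pi_div_two]
    ring
  obtain ⟨hsin, hcos⟩ := sin_nonpos_and_cos_nonneg_of_mem_Icc (x := p * π / 2)
    ⟨by nlinarith [pi_pos], by nlinarith [pi_pos]⟩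
  rw [hend, integral_congr fun θ _ ↦ hintegrand θ, intervalIntegral.integral_const_mul]
  exact mul_nonneg (neg_nonneg.mpr hsin)
    (integral_neg_cos_div_sin_half_sq_nonneg (by linarith) hsin hcos)
end

section
/- For every integer 2 ≤ d ≤ 4 and every real 2 ≤ p ≤ 4: (2/π)·(4/(dp+2)²)·∫_0^{π(d+1)/2} (sin θ / sin(2θ/(dp+2)))² dθ ≤ 1. -/
/-!
Write `N = dp + 2` and `x = 2θ / N`. The integrand `(4 / N²) (sin θ / sin x)²` equals
`(sin θ / θ)² (x / sin x)²`, and `x / sin x` increases on `(0, π)` by concavity of `sin`, so the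
integrand decreases in `N` and is dominated by its value at `p = 2`, i.e. `N = 2n` with `n = d + 1`.
There the substitution `θ = n v` turns the integral into `n⁻¹ ∫₀^{π/2} (sin nv / sin v)² dv`,
a Fejér-kernel integral equal to `n π / 2`: by induction on `n`, using
`sin² ((n+1)v) - sin² (nv) = sin v sin ((2n+1)v)` and the Dirichlet-kernel integral
`∫₀^{π/2} sin ((2n+1)v) / sin v dv = π / 2`.
-/

open Real MeasureTheory intervalIntegral

lemma abs_sin_nat_mul_le (n : ℕ) (x : ℝ) : |sin (n * x)| ≤ n * |sin x| := by
  induction n with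
  | zero => simp
  | succ n ih =>
    rw [Nat.cast_succ, add_mul, one_mul, sin_add]
    calc |sin (n * x) * cos x + cos (n * x) * sin x|
        ≤ |sin (n * x)| * |cos x| + |cos (n * x)| * |sin x| := by
          rw [← abs_mul, ← abs_mul]; exact abs_add_le _ _
      _ ≤ n * |sin x| * 1 + 1 * |sin x| := by
          gcongr
          exacts [abs_cos_le_one x, abs_cos_le_one _]
      _ = (n + 1) * |sin x| := by ring

lemma abs_sin_nat_mul_div_sin_le (n : ℕ) (x : ℝ) : |sin (n * x) / sin x| ≤ n := by
  rcases eq_or_ne (sin x) 0 with hx | hx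
  · simp [hx]
  · rw [abs_div, div_le_iff₀ (abs_pos.2 hx)]
    exact abs_sin_nat_mul_le n x

lemma intervalIntegrable_of_abs_le {f : ℝ → ℝ} (hf : Measurable f) {C : ℝ} (h : ∀ x, |f x| ≤ C)
    (a b : ℝ) : IntervalIntegrable f volume a b :=
  (intervalIntegrable_const (c := C)).mono_fun' hf.aestronglyMeasurable
    (ae_of_all _ fun x => by simpa only [Real.norm_eq_abs] using h x)

lemma integral_congr_of_sin_ne_zero {f g : ℝ → ℝ}
    (h : ∀ x, sin x ≠ 0 → f x = g x) : ∫ x in 0..π / 2, f x = ∫ x in 0..π / 2, g x := by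
  refine integral_congr_ae (ae_of_all _ fun x hx => h x (sin_pos_of_pos_of_lt_pi ?_ ?_).ne')
  all_goals rw [Set.uIoc_of_le pi_div_two_pos.le] at hx
  · exact hx.1
  · linarith [hx.2, pi_pos]

lemma integral_cos_two_nat_mul {m : ℕ} (hm : m ≠ 0) : ∫ x in 0..π / 2, cos (2 * m * x) = 0 := by
  have hm' : (2 * m : ℝ) ≠ 0 := by positivity
  rw [integral_comp_mul_left cos hm', integral_cos, mul_zero, sin_zero, sub_zero,
    show 2 * (m : ℝ) * (π / 2) = m * π by ring, sin_nat_mul_pi, smul_zero]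

lemma sin_odd_succ_mul_div_sin (n : ℕ) {x : ℝ} (hx : sin x ≠ 0) :
    sin ((2 * (n + 1 : ℕ) + 1) * x) / sin x
      = sin ((2 * n + 1) * x) / sin x + 2 * cos (2 * (n + 1 : ℕ) * x) := by
  push_cast
  rw [show (2 * (n + 1) + 1) * x = 2 * (n + 1) * x + x by ring,
    show (2 * n + 1) * x = 2 * (n + 1) * x - x by ring, sin_add, sin_sub]
  field_simp
  ring

lemma intervalIntegrable_sin_odd_mul_div_sin (n : ℕ) (a b : ℝ) :
    IntervalIntegrable (fun x => sin ((2 * n + 1) * x) / sin x) volume a b := by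
  refine intervalIntegrable_of_abs_le (by fun_prop) (C := 2 * n + 1) (fun x => ?_) a b
  exact_mod_cast abs_sin_nat_mul_div_sin_le (2 * n + 1) x

lemma integral_sin_odd_mul_div_sin (n : ℕ) :
    ∫ x in 0..π / 2, sin ((2 * n + 1) * x) / sin x = π / 2 := by
  induction n with
  | zero =>
    rw [integral_congr_of_sin_ne_zero (g := fun _ => 1) fun x hx => by simp [div_self hx]]
    simp
  | succ n ih =>
    rw [integral_congr_of_sin_ne_zero
        (g := fun x => sin ((2 * n + 1) * x) / sin x + 2 * cos (2 * (n + 1 : ℕ) * x))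
        fun x hx => sin_odd_succ_mul_div_sin n hx,
      integral_add (intervalIntegrable_sin_odd_mul_div_sin n _ _)
        (Continuous.intervalIntegrable (by fun_prop) _ _),
      intervalIntegral.integral_const_mul, integral_cos_two_nat_mul n.succ_ne_zero, ih]
    ring

lemma sq_sin_succ_mul_div_sin (n : ℕ) (x : ℝ) :
    (sin ((n + 1 : ℕ) * x) / sin x) ^ 2
      = (sin (n * x) / sin x) ^ 2 + sin ((2 * n + 1) * x) / sin x := by
  rcases eq_or_ne (sin x) 0 with hx | hx
  · simp [hx]
  have key : sin ((n + 1) * x) ^ 2 = sin (n * x) ^ 2 + sin x * sin ((2 * n + 1) * x) := by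
    set a := (n + 1 : ℝ) * x
    set b := (n : ℝ) * x
    rw [show x = a - b by ring, show (2 * n + 1) * (a - b) = a + b by ring, sin_add, sin_sub]
    linear_combination sin b ^ 2 * sin_sq_add_cos_sq a - sin a ^ 2 * sin_sq_add_cos_sq b
  rw [div_pow, div_pow, Nat.cast_succ, key]
  field_simp

lemma integral_sin_nat_mul_div_sin_sq (n : ℕ) :
    ∫ x in 0..π / 2, (sin (n * x) / sin x) ^ 2 = n * π / 2 := by
  induction n with
  | zero => simp
  | succ n ih =>
    have hint : IntervalIntegrable (fun x => (sin (n * x) / sin x) ^ 2) volume 0 (π / 2) := by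
      refine intervalIntegrable_of_abs_le (by fun_prop) (C := n ^ 2) (fun x => ?_) _ _
      rw [abs_pow]
      exact pow_le_pow_left₀ (abs_nonneg _) (abs_sin_nat_mul_div_sin_le n x) 2
    simp_rw [sq_sin_succ_mul_div_sin]
    rw [integral_add hint (intervalIntegrable_sin_odd_mul_div_sin n _ _), ih,
      integral_sin_odd_mul_div_sin]
    push_cast
    ring

-- At `N = dp + 2` this is the integrand of the theorem; at `N = 2n` it is
-- `(sin θ / (n sin (θ / n)))²`, a rescaled Fejér kernel.
noncomputable def sinRatioSq (N θ : ℝ) : ℝ := 4 / N ^ 2 * (sin θ / sin (2 * θ / N)) ^ 2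

lemma sinRatioSq_nonneg (N θ : ℝ) : 0 ≤ sinRatioSq N θ := by
  unfold sinRatioSq; positivity

lemma sinRatioSq_eq {N θ : ℝ} (hN : N ≠ 0) (hθ : θ ≠ 0) :
    sinRatioSq N θ = (sin θ / θ) ^ 2 * ((2 * θ / N) / sin (2 * θ / N)) ^ 2 := by
  unfold sinRatioSq
  field_simp
  ring

lemma sin_div_le_sin_div {x y : ℝ} (hx : 0 < x) (hxy : x ≤ y) (hy : y ≤ π) :
    sin y / y ≤ sin x / x := by
  rcases hxy.eq_or_lt with rfl | hxy
  · exact le_rfl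
  have h := strictConcaveOn_sin_Icc.secant_strict_mono (a := 0)
    ⟨le_rfl, pi_pos.le⟩ ⟨hx.le, by linarith⟩ ⟨by linarith, hy⟩ hx.ne' (by linarith) hxy
  simpa only [sin_zero, sub_zero] using h.le

lemma div_sin_le_div_sin {x y : ℝ} (hx : 0 < x) (hxy : x ≤ y) (hy : y < π) :
    x / sin x ≤ y / sin y := by
  have hy0 : 0 < sin y / y := div_pos (sin_pos_of_pos_of_lt_pi (hx.trans_le hxy) hy) (by linarith)
  simpa only [inv_div] using inv_anti₀ hy0 (sin_div_le_sin_div hx hxy hy.le)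

lemma sinRatioSq_le_of_le {M N θ : ℝ} (hM : 0 < M) (hMN : M ≤ N) (hθ : 0 ≤ θ)
    (hθM : 2 * θ / M < π) :
    sinRatioSq N θ ≤ sinRatioSq M θ := by
  rcases hθ.eq_or_lt with rfl | hθ
  · simp [sinRatioSq]
  have hN : 0 < N := hM.trans_le hMN
  have hx : 0 < 2 * θ / N := by positivity
  have hxy : 2 * θ / N ≤ 2 * θ / M := div_le_div_of_nonneg_left (by positivity) hM hMN
  have hsin : 0 < sin (2 * θ / N) := sin_pos_of_pos_of_lt_pi hx (by linarith)
  rw [sinRatioSq_eq hN.ne' hθ.ne', sinRatioSq_eq hM.ne' hθ.ne']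
  exact mul_le_mul_of_nonneg_left
    (pow_le_pow_left₀ (by positivity) (div_sin_le_div_sin hx hxy hθM) 2) (sq_nonneg _)

lemma sinRatioSq_two_mul {n : ℕ} (hn : n ≠ 0) (θ : ℝ) :
    sinRatioSq (2 * n) θ = (sin (n * (θ / n)) / sin (θ / n)) ^ 2 / n ^ 2 := by
  have hn' : (n : ℝ) ≠ 0 := by exact_mod_cast hn
  rw [sinRatioSq, mul_div_cancel₀ θ hn', mul_div_mul_left θ (n : ℝ) two_ne_zero]
  ring

lemma sinRatioSq_two_mul_le_one (n : ℕ) (θ : ℝ) : sinRatioSq (2 * n) θ ≤ 1 := by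
  rcases eq_or_ne n 0 with rfl | hn
  · simp [sinRatioSq]
  rw [sinRatioSq_two_mul hn, div_le_one (by positivity), ← sq_abs]
  exact pow_le_pow_left₀ (abs_nonneg _) (abs_sin_nat_mul_div_sin_le n _) 2

lemma integral_sinRatioSq_two_mul {n : ℕ} (hn : n ≠ 0) :
    ∫ θ in 0..π * n / 2, sinRatioSq (2 * n) θ = π / 2 := by
  have hn' : (n : ℝ) ≠ 0 := by exact_mod_cast hn
  simp_rw [sinRatioSq_two_mul hn]
  rw [intervalIntegral.integral_comp_div (fun x => (sin (n * x) / sin x) ^ 2 / n ^ 2) hn',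
    intervalIntegral.integral_div, zero_div, mul_div_right_comm, mul_div_cancel_right₀ _ hn',
    integral_sin_nat_mul_div_sin_sq, smul_eq_mul]
  field_simp

lemma integral_sinRatioSq_le {n : ℕ} {N : ℝ} (hn : n ≠ 0) (hN : 2 * n ≤ N) :
    ∫ θ in 0..π * n / 2, sinRatioSq N θ ≤ π / 2 := by
  have hM : (0 : ℝ) < 2 * n := by positivity
  have hL : 0 ≤ π * n / 2 := by positivity
  have hint : IntervalIntegrable (sinRatioSq (2 * n)) volume 0 (π * n / 2) :=
    intervalIntegrable_of_abs_le (by unfold sinRatioSq; fun_prop) (C := 1)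
      (fun θ => (abs_of_nonneg (sinRatioSq_nonneg _ θ)).trans_le (sinRatioSq_two_mul_le_one n θ))
      _ _
  rw [← integral_sinRatioSq_two_mul hn, intervalIntegral.integral_of_le hL,
    intervalIntegral.integral_of_le hL]
  refine integral_mono_of_nonneg (ae_of_all _ (sinRatioSq_nonneg N)) hint.1
    (ae_restrict_of_forall_mem measurableSet_Ioc fun θ hθ => sinRatioSq_le_of_le hM hN hθ.1.le ?_)
  rw [div_lt_iff₀ hM]
  nlinarith [hθ.2, pi_pos]

theorem stmt18_general (d : ℕ) (p : ℝ) (hp2 : 2 ≤ p) :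
    (2 / Real.pi) * (4 / ((d : ℝ) * p + 2) ^ 2) *
      ∫ θ in (0 : ℝ)..(Real.pi * (d + 1) / 2),
        (Real.sin θ / Real.sin (2 * θ / ((d : ℝ) * p + 2))) ^ 2 ≤ 1 := by
  have hN : 2 * ((d + 1 : ℕ) : ℝ) ≤ d * p + 2 := by push_cast; nlinarith
  have hbound := integral_sinRatioSq_le d.succ_ne_zero hN
  push_cast at hbound
  rw [mul_assoc, ← intervalIntegral.integral_const_mul]
  calc 2 / π * ∫ θ in 0..π * (d + 1) / 2, sinRatioSq (d * p + 2) θ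
      ≤ 2 / π * (π / 2) := by gcongr
    _ = 1 := by field_simp

theorem stmt18 (d : ℕ) (hd2 : 2 ≤ d) (hd4 : d ≤ 4) (p : ℝ) (hp2 : 2 ≤ p) (hp4 : p ≤ 4) :
    (2 / Real.pi) * (4 / ((d : ℝ) * p + 2) ^ 2) *
      ∫ θ in (0 : ℝ)..(Real.pi * (d + 1) / 2),
        (Real.sin θ / Real.sin (2 * θ / ((d : ℝ) * p + 2))) ^ 2 ≤ 1 :=
  stmt18_general d p hp2
end
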